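/- arXiv:1709.08769 — 3 statements merged into one kernel-verified Lean document; each statement's English description precedes it below -/
import Mathlib

section
/- Let l and m be integers with 1 ≤ l and 2l ≤ m − 1 (so that m − 2l ≥ 1). Then Σ_{i=0}^{l−1} (−1)^i · ((m − 2l + 2i)/(m − 2l + i)) · binom(m − 2l + i, i) = (−1)^{l−1} · binom(m − l − 1, l − 1), an identity in the rational numbers. -/
/-! With `n = m - 2l ≥ 1`, for `i ≥ 1` the summand `(n + 2i)/(n + i) · C(n + i, i)` equals
`C(n + i, i) + C(n + i - 1, i - 1)` by the absorption identity
`i · C(n + i, i) = (n + i) · C(n + i - 1, i - 1)`, while for `i = 0` it is `1` since `n ≠ 0`.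
With these values the alternating sum telescopes to its last binomial coefficient. -/

open Finset

theorem sum_range_neg_one_pow_succ_mul_add {R : Type*} [CommRing R] (a : ℕ → R) (L : ℕ) :
    ∑ i ∈ range L, (-1 : R) ^ (i + 1) * (a (i + 1) + a i) = (-1) ^ L * a L - a 0 := by
  convert sum_range_sub (fun i ↦ (-1 : R) ^ i * a i) L using 1
  · exact sum_congr rfl fun i _ ↦ by ring
  · simp

theorem div_mul_choose_succ_eq_choose_add_choose {K : Type*} [Field K] [CharZero K] (n i : ℕ) :
    ((n + 2 * (i + 1) : K) / (n + (i + 1))) * (n + (i + 1)).choose (i + 1)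
      = (n + (i + 1)).choose (i + 1) + (n + i).choose i := by
  have absorb : ((n + i + 1 : ℕ) : K) * (n + i).choose i
      = (n + (i + 1)).choose (i + 1) * (i + 1 : ℕ) :=
    mod_cast Nat.add_one_mul_choose_eq (n + i) i
  have hpos : (n + (i + 1) : K) ≠ 0 := by norm_cast
  generalize ((n + (i + 1)).choose (i + 1) : K) = c at absorb ⊢
  rw [div_mul_eq_mul_div, div_eq_iff hpos]
  push_cast at absorb
  linear_combination -absorb

theorem sum_range_succ_neg_one_pow_mul_div_mul_choose {K : Type*} [Field K] [CharZero K]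
    {n : ℕ} (hn : n ≠ 0) (L : ℕ) :
    ∑ i ∈ range (L + 1), (-1 : K) ^ i * ((n + 2 * i : K) / (n + i)) * (n + i).choose i
      = (-1) ^ L * (n + L).choose L := by
  have hn' : (n : K) ≠ 0 := Nat.cast_ne_zero.mpr hn
  have hsucc : ∀ i ∈ range L, (-1 : K) ^ (i + 1) * ((n + 2 * (i + 1 : ℕ) : K) / (n + (i + 1 : ℕ)))
      * (n + (i + 1)).choose (i + 1)
      = (-1) ^ (i + 1) * (((n + (i + 1)).choose (i + 1) : K) + (n + i).choose i) := by
    intro i _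
    rw [mul_assoc, Nat.cast_add_one, div_mul_choose_succ_eq_choose_add_choose]
  rw [sum_range_succ', sum_congr rfl hsucc,
    sum_range_neg_one_pow_succ_mul_add (fun i ↦ ((n + i).choose i : K))]
  simp [hn']

/-- Lemma 3.2 (second part): for integers `l, m` with `1 ≤ l` and `2l ≤ m - 1`,
`∑_{i=0}^{l-1} (-1)^i · ((m-2l+2i)/(m-2l+i)) · binom(m-2l+i, i)
  = (-1)^{l-1} · binom(m-l-1, l-1)` in the rational numbers. -/
theorem sum_alternating_ratio_binom_special (l m : ℤ) (hl : 1 ≤ l) (hlm : 2 * l ≤ m - 1) :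
    ∑ i ∈ Finset.range l.toNat,
      (-1 : ℚ) ^ i * (((m : ℚ) - 2 * l + 2 * i) / ((m : ℚ) - 2 * l + i)) *
        (Nat.choose (m - 2 * l + i).toNat i : ℚ)
      = (-1 : ℚ) ^ (l.toNat - 1) * (Nat.choose (m - l - 1).toNat (l - 1).toNat : ℚ) := by
  obtain ⟨n, hn⟩ : ∃ n : ℕ, m - 2 * l = n := ⟨(m - 2 * l).toNat, by omega⟩
  obtain ⟨L, hL⟩ : ∃ L : ℕ, l = L + 1 := ⟨(l - 1).toNat, by omega⟩
  have hmQ : (m : ℚ) - 2 * l = n := by exact_mod_cast hn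
  have hl_toNat : l.toNat = L + 1 := by omega
  have hchoose : (m - l - 1).toNat = n + L ∧ (l - 1).toNat = L := by omega
  rw [hl_toNat, hchoose.1, hchoose.2, Nat.add_sub_cancel, hmQ,
    ← sum_range_succ_neg_one_pow_mul_div_mul_choose (by omega)]
  refine sum_congr rfl fun i _ ↦ ?_
  rw [show (m - 2 * l + i).toNat = n + i by omega]
end

section
/- Let n > 2 be an even integer. Then in the polynomial ring ℚ[x, y] the identity Σ_{i=1}^{(n−2)/2} Σ_{j=0}^{(n−2i)/2} (−1)^j · ((n − 2i)/(n − 2i − j)) · binom(n − 2i − j, j) · x^{i+j} y^{n−2i−2j} + x^{n/2} = Σ_{l=1}^{n/2} (−1)^{l−1} · binom(n − l − 1, l − 1) · x^{l} y^{n−2l} holds. -/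
/-!
Write `A i j = (-1)^j C(n-2i-j, j) x^(i+j) y^(n-2i-2j)`. With `d = n - 2i - j`, the identity
`(d + j)/d · C(d, j) = C(d, j) + C(d-1, j-1)` for `j ≥ 1` splits each summand of the double sum
as `A i j - A (i+1) (j-1)`. So the inner sum is `R i - R (i+1)` with `R i = ∑_j A i j`, the outer
sum telescopes to `R 1 - R (n/2)`, `R (n/2) = x^(n/2)` because `n` is even, and `R 1` is the
right-hand side reindexed by `l = j + 1`.
-/

open MvPolynomial Finset

theorem Nat.add_mul_choose_eq (d : ℕ) {j : ℕ} (hj : 0 < j) :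
    (d + j) * d.choose j = d * (d.choose j + (d - 1).choose (j - 1)) := by
  obtain ⟨k, rfl⟩ := Nat.exists_eq_add_of_lt hj
  rcases d with _ | e
  · simp
  · simp only [zero_add, Nat.add_sub_cancel]
    rw [mul_add (e + 1), Nat.add_one_mul_choose_eq e k]
    ring

noncomputable def chebTerm (n i j : ℕ) : MvPolynomial (Fin 2) ℚ :=
  C ((-1) ^ j * ((n - 2 * i - j).choose j : ℚ)) * X 0 ^ (i + j) * X 1 ^ (n - 2 * i - 2 * j)

/-- `chebRow n i = x^i U_(n-2i)(x, y)`, where `U_m = ∑_j (-1)^j C(m-j, j) x^j y^(m-2j)` is the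
homogenized Chebyshev polynomial of the second kind. -/
noncomputable def chebRow (n i : ℕ) : MvPolynomial (Fin 2) ℚ :=
  ∑ j ∈ range ((n - 2 * i) / 2 + 1), chebTerm n i j

theorem summand_eq_chebTerm_sub {n i j : ℕ} (hij : 2 * i + 2 * j ≤ n) (hi : 2 * i < n) :
    C ((-1 : ℚ) ^ j * (((n : ℚ) - 2 * i) / ((n : ℚ) - 2 * i - j)) *
        ((n - 2 * i - j).choose j : ℚ)) * X 0 ^ (i + j) * X 1 ^ (n - 2 * i - 2 * j)
      = chebTerm n i j - if j = 0 then 0 else chebTerm n (i + 1) (j - 1) := by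
  rcases j with _ | k
  · have : (n : ℚ) - 2 * i ≠ 0 := by
      rw [sub_ne_zero]; exact_mod_cast hi.ne'
    simp [chebTerm, this]
  · obtain ⟨d, rfl⟩ : ∃ d, n = 2 * i + (k + 1) + d := ⟨n - 2 * i - (k + 1), by omega⟩
    have hchoose : ((d + (k + 1) : ℕ) : ℚ) * d.choose (k + 1)
        = d * (d.choose (k + 1) + (d - 1).choose k) := by
      exact_mod_cast Nat.add_mul_choose_eq d k.succ_pos
    have hd0 : (d : ℚ) ≠ 0 := by exact_mod_cast (by omega : d ≠ 0)
    rw [if_neg k.succ_ne_zero, chebTerm, chebTerm, Nat.add_sub_cancel,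
      show i + 1 + k = i + (k + 1) by omega,
      show 2 * i + (k + 1) + d - 2 * (i + 1) - 2 * k
        = 2 * i + (k + 1) + d - 2 * i - 2 * (k + 1) by omega,
      show 2 * i + (k + 1) + d - 2 * (i + 1) - k = d - 1 by omega,
      show 2 * i + (k + 1) + d - 2 * i - (k + 1) = d by omega,
      ← sub_mul, ← sub_mul, ← map_sub]
    congr 3
    push_cast at hchoose ⊢
    rw [show (2 * i + (k + 1) + d - 2 * i - (k + 1) : ℚ) = d by ring]
    field_simp
    linear_combination -(-1) ^ k * hchoose

theorem sum_summand_eq_chebRow_sub {n i : ℕ} (hi : 2 * i + 2 ≤ n) :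
    ∑ j ∈ range ((n - 2 * i) / 2 + 1),
        C ((-1 : ℚ) ^ j * (((n : ℚ) - 2 * i) / ((n : ℚ) - 2 * i - j)) *
          ((n - 2 * i - j).choose j : ℚ)) * X 0 ^ (i + j) * X 1 ^ (n - 2 * i - 2 * j)
      = chebRow n i - chebRow n (i + 1) := by
  have hshift : ∑ j ∈ range ((n - 2 * i) / 2 + 1),
      (if j = 0 then 0 else chebTerm n (i + 1) (j - 1)) = chebRow n (i + 1) := by
    rw [chebRow, show (n - 2 * i) / 2 = (n - 2 * (i + 1)) / 2 + 1 by omega, sum_range_succ']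
    simp
  rw [sum_congr rfl fun j hj => summand_eq_chebTerm_sub (by grind) (by omega),
    sum_sub_distrib, hshift]
  rfl

theorem sum_chebRow_sub_succ (n m : ℕ) :
    ∑ i ∈ Icc 1 m, (chebRow n i - chebRow n (i + 1)) = chebRow n 1 - chebRow n (m + 1) := by
  simpa only [neg_sub_neg, Ico_add_one_right_eq_Icc] using
    sum_Ico_sub (fun i => -chebRow n i) (Nat.le_add_left 1 m)

theorem chebRow_half {n : ℕ} (hn : Even n) : chebRow n (n / 2) = X 0 ^ (n / 2) := by
  simp [chebRow, chebTerm, Nat.mul_div_cancel' hn.two_dvd]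

theorem chebRow_one {n : ℕ} (hn : 2 ≤ n) :
    chebRow n 1 = ∑ l ∈ Icc 1 (n / 2),
      C ((-1 : ℚ) ^ (l - 1) * ((n - l - 1).choose (l - 1) : ℚ)) * X 0 ^ l
        * X 1 ^ (n - 2 * l) := by
  rw [chebRow, ← Ico_add_one_right_eq_Icc, sum_Ico_eq_sum_range,
    show n / 2 + 1 - 1 = (n - 2 * 1) / 2 + 1 by omega]
  refine sum_congr rfl fun j _ => ?_
  rw [chebTerm, Nat.add_sub_cancel_left, show n - 2 * 1 - j = n - (1 + j) - 1 by omega,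
    show n - 2 * 1 - 2 * j = n - 2 * (1 + j) by omega]

/-- The polynomial identity in `ℚ[x, y]` (with `x = X 0`, `y = X 1` in `MvPolynomial (Fin 2) ℚ`)
used in the proof of Lemma 3.3(3): for `n > 2` even,
`∑_{i=1}^{(n-2)/2} ∑_{j=0}^{(n-2i)/2} (-1)^j ((n-2i)/(n-2i-j)) binom(n-2i-j, j) x^{i+j} y^{n-2i-2j}
  + x^{n/2} = ∑_{l=1}^{n/2} (-1)^{l-1} binom(n-l-1, l-1) x^l y^{n-2l}`. -/
theorem poly_identity_even (n : ℕ) (hn : 2 < n) (hev : Even n) :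
    (∑ i ∈ Finset.Icc 1 ((n - 2) / 2), ∑ j ∈ Finset.range ((n - 2 * i) / 2 + 1),
        C ((-1 : ℚ) ^ j * (((n : ℚ) - 2 * i) / ((n : ℚ) - 2 * i - j)) *
            (Nat.choose (n - 2 * i - j) j : ℚ)) *
          X 0 ^ (i + j) * X 1 ^ (n - 2 * i - 2 * j))
      + X 0 ^ (n / 2)
      = ∑ l ∈ Finset.Icc 1 (n / 2),
          C ((-1 : ℚ) ^ (l - 1) * (Nat.choose (n - l - 1) (l - 1) : ℚ)) *
            (X 0 : MvPolynomial (Fin 2) ℚ) ^ l * X 1 ^ (n - 2 * l) := by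
  rw [sum_congr rfl fun i hi => sum_summand_eq_chebRow_sub (by grind), sum_chebRow_sub_succ,
    show (n - 2) / 2 + 1 = n / 2 by omega, chebRow_half hev, chebRow_one hn.le, sub_add_cancel]
end

section
/- The quotient ring ℤ[x, y, z₊, z₋]/I is generated as a ℤ-module by the set { x̄^i ȳ^j : 0 ≤ i ≤ n−1, 0 ≤ j ≤ 2n−2 } ∪ { x̄^i ȳ^l z̄₊^m : 0 ≤ i ≤ n−1, 0 ≤ l ≤ n−2, m ≥ 1 } ∪ { x̄^i ȳ^l z̄₋^m : 0 ≤ i ≤ n−1, 0 ≤ l ≤ n−2, m ≥ 1 }. -/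
open MvPolynomial

/- We work in `ℤ[x, y, z₊, z₋] = MvPolynomial (Fin 4) ℤ`, with
`x = X 0`, `y = X 1`, `z₊ = X 2`, `z₋ = X 3`.
For an integer `t ≥ 0`, `c(t) = ⌊(t+1)/2⌋`; note `c(n-2) = (n-1)/2` and `c(n-1) = n/2`
in natural-number division. -/

/-- `f₁(x,y) = ∑_{i=0}^{c(n-2)} (-1)^i binom(n-1-i, i) x^i y^{n-1-2i}`. -/
noncomputable def f1 (n : ℕ) : MvPolynomial (Fin 4) ℤ :=
  ∑ i ∈ Finset.range ((n - 1) / 2 + 1),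
    C ((-1 : ℤ) ^ i * (Nat.choose (n - 1 - i) i : ℤ)) * X 0 ^ i * X 1 ^ (n - 1 - 2 * i)

/-- `f₂(x,y) = ∑_{i=0}^{c(n-1)} (-1)^i (n/(n-i)) binom(n-i, i) x^i y^{n-2i} - 2`
(each coefficient `n/(n-i) · binom(n-i, i)` is an integer). -/
noncomputable def f2 (n : ℕ) : MvPolynomial (Fin 4) ℤ :=
  (∑ i ∈ Finset.range (n / 2 + 1),
    C ((-1 : ℤ) ^ i * ((n * Nat.choose (n - i) i / (n - i) : ℕ) : ℤ)) *
      X 0 ^ i * X 1 ^ (n - 2 * i)) - 2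

/-- `f₃(x,y) = ∑_{i=1}^{c(n-2)} (-1)^{i-1} binom(n-i-2, i-1) x^{i+1} y^{n-1-2i}`. -/
noncomputable def f3 (n : ℕ) : MvPolynomial (Fin 4) ℤ :=
  ∑ i ∈ Finset.Icc 1 ((n - 1) / 2),
    C ((-1 : ℤ) ^ (i - 1) * (Nat.choose (n - i - 2) (i - 1) : ℤ)) *
      X 0 ^ (i + 1) * X 1 ^ (n - 1 - 2 * i)

/-- `f₄(x,y) = ∑_{i=1}^{c(n-1)} (-1)^{i-1} binom(n-i-1, i-1) x^i y^{n-2i}`. -/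
noncomputable def f4 (n : ℕ) : MvPolynomial (Fin 4) ℤ :=
  ∑ i ∈ Finset.Icc 1 (n / 2),
    C ((-1 : ℤ) ^ (i - 1) * (Nat.choose (n - i - 1) (i - 1) : ℤ)) *
      X 0 ^ i * X 1 ^ (n - 2 * i)

/-- The ideal `I` of `ℤ[x, y, z₊, z₋]` generated by `x^n - 1`, `f₁f₂`,
`z₊z₋ - 1 - f₁(2y + 4f₃)`, `f₁(z₊ - 1 - 2f₄)` and `f₁(z₊ - z₋)`. -/
noncomputable def idealI (n : ℕ) : Ideal (MvPolynomial (Fin 4) ℤ) :=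
  Ideal.span
    {X 0 ^ n - 1,
     f1 n * f2 n,
     X 2 * X 3 - 1 - f1 n * (2 * X 1 + 4 * f3 n),
     f1 n * (X 2 - 1 - 2 * f4 n),
     f1 n * (X 2 - X 3)}

/-! In the quotient `x̄ⁿ = 1`, so only the `y`- and `z`-exponents need reducing. Modulo terms
of `y`-degree at most `n - 2` we have `f₁ ≡ yⁿ⁻¹` and `f₂ ≡ yⁿ`. Hence `f₁f₂ = 0` rewrites
`y²ⁿ⁻¹` as a polynomial in `x, y` of `y`-degree at most `2n - 2`, while
`f₁z₊ = f₁(1 + 2f₄) = f₁z₋` rewrites `yⁿ⁻¹zᵐ` (`z = z₊, z₋`) as `zᵐ` times a polynomial of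
`y`-degree at most `n - 2` plus `zᵐ⁻¹` times a polynomial in `x, y`. Induction on `m` and on the
`y`-degree reduces every `x̄ᵃȳᵇz̄ᵐ` to the spanning set, and `z₊z₋ = 1 + f₁(2y + 4f₃)` removes
the monomials containing both `z₊` and `z₋`. -/

section YDegree

variable {R : Type*} [CommRing R] (x y : R)

def yDegreeLE (D : ℕ) : Submodule ℤ R :=
  Submodule.span ℤ {c | ∃ i j : ℕ, j ≤ D ∧ c = x ^ i * y ^ j}

theorem intCast_mem_yDegreeLE (D : ℕ) (k : ℤ) : (k : R) ∈ yDegreeLE x y D := by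
  simpa using (yDegreeLE x y D).smul_mem k (Submodule.subset_span ⟨0, 0, D.zero_le, rfl⟩)

variable {x y}

theorem pow_mul_pow_mem_yDegreeLE {D j : ℕ} (i : ℕ) (hj : j ≤ D) :
    x ^ i * y ^ j ∈ yDegreeLE x y D :=
  Submodule.subset_span ⟨i, j, hj, rfl⟩

theorem pow_mem_yDegreeLE {D j : ℕ} (hj : j ≤ D) : y ^ j ∈ yDegreeLE x y D := by
  simpa using pow_mul_pow_mem_yDegreeLE (x := x) 0 hj

theorem yDegreeLE_mono {D E : ℕ} (h : D ≤ E) : yDegreeLE x y D ≤ yDegreeLE x y E :=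
  Submodule.span_mono fun _ ⟨i, j, hj, hc⟩ => ⟨i, j, hj.trans h, hc⟩

theorem mul_mem_yDegreeLE {D E F : ℕ} {p q : R} (hp : p ∈ yDegreeLE x y D)
    (hq : q ∈ yDegreeLE x y E) (h : D + E ≤ F) : p * q ∈ yDegreeLE x y F := by
  have hpq := Submodule.mul_mem_mul hp hq
  rw [yDegreeLE, yDegreeLE, Submodule.span_mul_span] at hpq
  refine Submodule.span_mono ?_ hpq
  rintro _ ⟨_, ⟨i, j, hj, rfl⟩, _, ⟨i', j', hj', rfl⟩, rfl⟩
  exact ⟨i + i', j + j', by omega, by ring⟩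

theorem map_mem_yDegreeLE {S : Type*} [CommRing S] (φ : R →+* S) {D : ℕ} {p : R}
    (hp : p ∈ yDegreeLE x y D) : φ p ∈ yDegreeLE (φ x) (φ y) D := by
  have hφp := Submodule.mem_map_of_mem (f := φ.toAddMonoidHom.toIntLinearMap) hp
  rw [yDegreeLE, Submodule.map_span] at hφp
  refine Submodule.span_mono ?_ hφp
  rintro _ ⟨_, ⟨i, j, hj, rfl⟩, rfl⟩
  exact ⟨i, j, hj, by simp⟩

variable {M : Submodule ℤ R} {w : R}

theorem mul_mem_of_mem_yDegreeLE {D : ℕ} {q : R}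
    (h : ∀ i j, j ≤ D → x ^ i * y ^ j * w ∈ M) (hq : q ∈ yDegreeLE x y D) : q * w ∈ M :=
  (Submodule.span_le (p := M.comap (LinearMap.mulRight ℤ w))).mpr
    (by rintro _ ⟨i, j, hj, rfl⟩; exact h i j hj) hq

theorem pow_mul_pow_mul_mem_of_pow_mul_eq {n D : ℕ} {p r : R} (hn : 0 < n) (hx : x ^ n = 1)
    (hp : p ∈ yDegreeLE x y D) (hw : y ^ (D + 1) * w = p * w + r)
    (hr : ∀ a b, x ^ a * y ^ b * r ∈ M)
    (hbase : ∀ i j, i < n → j ≤ D → x ^ i * y ^ j * w ∈ M) (a b : ℕ) :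
    x ^ a * y ^ b * w ∈ M := by
  induction b using Nat.strong_induction_on generalizing a with
  | _ b ih =>
  rcases le_or_gt b D with hb | hb
  · rw [pow_eq_pow_mod a hx]
    exact hbase _ _ (Nat.mod_lt a hn) hb
  obtain ⟨k, rfl⟩ : ∃ k, b = k + (D + 1) := ⟨b - (D + 1), by omega⟩
  have hsplit : x ^ a * y ^ (k + (D + 1)) * w = x ^ a * y ^ k * p * w + x ^ a * y ^ k * r := by
    linear_combination x ^ a * y ^ k * hw
  rw [hsplit]
  exact M.add_mem (mul_mem_of_mem_yDegreeLE (fun i j hj => ih j (by omega) i)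
    (mul_mem_yDegreeLE (pow_mul_pow_mem_yDegreeLE a le_rfl) hp le_rfl)) (hr a k)

theorem pow_mul_pow_mul_pow_mem_of_pow_mul_eq {n D E : ℕ} {z p q : R} (hn : 0 < n)
    (hx : x ^ n = 1) (hp : p ∈ yDegreeLE x y D) (hq : q ∈ yDegreeLE x y E)
    (hz : y ^ (D + 1) * z = p * z + q) (hxy : ∀ a b, x ^ a * y ^ b ∈ M)
    (hbase : ∀ i j m, i < n → j ≤ D → 0 < m → x ^ i * y ^ j * z ^ m ∈ M) (m a b : ℕ) :
    x ^ a * y ^ b * z ^ m ∈ M := by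
  induction m generalizing a b with
  | zero => simpa using hxy a b
  | succ m ih =>
    refine pow_mul_pow_mul_mem_of_pow_mul_eq hn hx hp (r := q * z ^ m)
      (by linear_combination z ^ m * hz) (fun a b => ?_)
      (fun i j hi hj => hbase i j (m + 1) hi hj m.succ_pos) a b
    rw [← mul_assoc]
    exact mul_mem_of_mem_yDegreeLE (fun i j _ => ih i j)
      (mul_mem_yDegreeLE (pow_mul_pow_mem_yDegreeLE a le_rfl) hq le_rfl)

theorem pow_mul_pow_mul_pow_mul_pow_mem_of_mul_eq {E : ℕ} {zp zm q : R}
    (hz : zp * zm = q) (hq : q ∈ yDegreeLE x y E)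
    (hp : ∀ m a b, x ^ a * y ^ b * zp ^ m ∈ M) (hm : ∀ m a b, x ^ a * y ^ b * zm ^ m ∈ M)
    (a b c d : ℕ) : x ^ a * y ^ b * zp ^ c * zm ^ d ∈ M := by
  induction d generalizing a b c with
  | zero => simpa using hp c a b
  | succ d ih =>
    cases c with
    | zero => simpa using hm (d + 1) a b
    | succ c =>
      have hsplit : x ^ a * y ^ b * zp ^ (c + 1) * zm ^ (d + 1)
          = x ^ a * y ^ b * q * (zp ^ c * zm ^ d) := by
        rw [← hz]; ring
      rw [hsplit]
      exact mul_mem_of_mem_yDegreeLE (fun i j _ => by rw [← mul_assoc]; exact ih i j c)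
        (mul_mem_yDegreeLE (pow_mul_pow_mem_yDegreeLE a le_rfl) hq le_rfl)

end YDegree

theorem Submodule.eq_top_of_forall_monomial_mem {σ R : Type*} [CommRing R]
    {φ : MvPolynomial σ ℤ →+* R} (hφ : Function.Surjective φ) {M : Submodule ℤ R}
    (h : ∀ s, φ (monomial s 1) ∈ M) : M = ⊤ := by
  refine M.eq_top_iff'.mpr fun r => ?_
  obtain ⟨p, rfl⟩ := hφ r
  induction p using MvPolynomial.induction_on' with
  | monomial s c =>
    rw [← mul_one c, ← smul_eq_mul, ← smul_monomial, map_zsmul]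
    exact M.smul_mem c (h s)
  | add p q hp hq => rw [map_add]; exact M.add_mem hp hq

theorem monomial_one_fin_four (s : Fin 4 →₀ ℕ) :
    (monomial s 1 : MvPolynomial (Fin 4) ℤ) = X 0 ^ s 0 * X 1 ^ s 1 * X 2 ^ s 2 * X 3 ^ s 3 := by
  rw [monomial_eq, C_1, one_mul, Finsupp.prod_fintype _ _ fun _ => pow_zero _,
    Fin.prod_univ_four]

theorem sum_C_mul_pow_mul_pow_mem_yDegreeLE {σ ι : Type*} {x y : MvPolynomial σ ℤ} {D : ℕ}
    (s : Finset ι) (c : ι → ℤ) (a b : ι → ℕ) (h : ∀ i ∈ s, b i ≤ D) :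
    ∑ i ∈ s, C (c i) * x ^ a i * y ^ b i ∈ yDegreeLE x y D :=
  Submodule.sum_mem _ fun i hi => by
    rw [mul_assoc, C_mul']
    exact Submodule.smul_mem _ _ (pow_mul_pow_mem_yDegreeLE _ (h i hi))

section

variable {n : ℕ}

theorem f1_sub_mem_yDegreeLE : f1 n - X 1 ^ (n - 1) ∈ yDegreeLE (X 0) (X 1) (n - 2) := by
  rw [f1, Finset.sum_range_succ']
  simp only [pow_zero, Nat.choose_zero_right, Nat.cast_one, mul_one, C_1, one_mul, Nat.sub_zero,
    mul_zero, add_sub_cancel_right]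
  exact sum_C_mul_pow_mul_pow_mem_yDegreeLE _ _ _ (fun k => n - 1 - 2 * (k + 1))
    fun k _ => by omega

theorem f2_sub_mem_yDegreeLE (hn : 0 < n) : f2 n - X 1 ^ n ∈ yDegreeLE (X 0) (X 1) (n - 2) := by
  rw [f2, Finset.sum_range_succ']
  simp only [pow_zero, Nat.choose_zero_right, mul_one, Nat.sub_zero, Nat.div_self hn,
    Nat.cast_one, C_1, one_mul, mul_zero, sub_right_comm _ (2 : MvPolynomial (Fin 4) ℤ),
    add_sub_cancel_right]
  exact Submodule.sub_mem _ (sum_C_mul_pow_mul_pow_mem_yDegreeLE _ _ _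
    (fun k => n - 2 * (k + 1)) fun k _ => by omega)
    (by exact_mod_cast intCast_mem_yDegreeLE (X 0) (X 1) _ 2)

theorem f3_mem_yDegreeLE : f3 n ∈ yDegreeLE (X 0) (X 1) (n - 2) :=
  sum_C_mul_pow_mul_pow_mem_yDegreeLE _ _ _ (fun i => n - 1 - 2 * i) fun i hi => by
    simp only [Finset.mem_Icc] at hi; omega

theorem f4_mem_yDegreeLE : f4 n ∈ yDegreeLE (X 0) (X 1) (n - 2) :=
  sum_C_mul_pow_mul_pow_mem_yDegreeLE _ _ _ (fun i => n - 2 * i) fun i hi => by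
    simp only [Finset.mem_Icc] at hi; omega

theorem f1_mem_yDegreeLE : f1 n ∈ yDegreeLE (X 0) (X 1) (n - 1) := by
  simpa using Submodule.add_mem _
    (yDegreeLE_mono (by omega : n - 2 ≤ n - 1) f1_sub_mem_yDegreeLE)
    (pow_mem_yDegreeLE (x := (X 0 : MvPolynomial (Fin 4) ℤ)) (le_refl (n - 1)))

theorem X1_pow_sub_f1_mul_f2_mem_yDegreeLE (hn : 2 ≤ n) :
    X 1 ^ (2 * n - 2 + 1) - f1 n * f2 n ∈ yDegreeLE (X 0) (X 1) (2 * n - 2) := by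
  have hsplit : (X 1 : MvPolynomial (Fin 4) ℤ) ^ (2 * n - 2 + 1) - f1 n * f2 n =
      -(X 1 ^ (n - 1) * (f2 n - X 1 ^ n) + (f1 n - X 1 ^ (n - 1)) * X 1 ^ n +
        (f1 n - X 1 ^ (n - 1)) * (f2 n - X 1 ^ n)) := by
    rw [show 2 * n - 2 + 1 = n - 1 + n by omega, pow_add]
    ring
  have hf2 := f2_sub_mem_yDegreeLE (n := n) (by omega)
  rw [hsplit]
  refine Submodule.neg_mem _ (Submodule.add_mem _ (Submodule.add_mem _ ?_ ?_) ?_)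
  · exact mul_mem_yDegreeLE (pow_mem_yDegreeLE le_rfl) hf2 (by omega)
  · exact mul_mem_yDegreeLE f1_sub_mem_yDegreeLE (pow_mem_yDegreeLE le_rfl) (by omega)
  · exact mul_mem_yDegreeLE f1_sub_mem_yDegreeLE hf2 (by omega)

theorem f1_mul_one_add_mem_yDegreeLE :
    f1 n * (1 + 2 * f4 n) ∈ yDegreeLE (X 0) (X 1) (2 * n - 2) := by
  refine mul_mem_yDegreeLE f1_mem_yDegreeLE (E := n - 2)
    (Submodule.add_mem _ (by exact_mod_cast intCast_mem_yDegreeLE (X 0) (X 1) _ 1) ?_) (by omega)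
  exact mul_mem_yDegreeLE (by exact_mod_cast intCast_mem_yDegreeLE (X 0) (X 1) 0 2)
    f4_mem_yDegreeLE (by omega)

theorem one_add_f1_mul_mem_yDegreeLE (hn : 2 ≤ n) :
    1 + f1 n * (2 * X 1 + 4 * f3 n) ∈ yDegreeLE (X 0) (X 1) (2 * n - 2) := by
  refine Submodule.add_mem _ (by exact_mod_cast intCast_mem_yDegreeLE (X 0) (X 1) _ 1) ?_
  refine mul_mem_yDegreeLE f1_mem_yDegreeLE (E := n - 1)
    (Submodule.add_mem _ ?_ ?_) (by omega)
  · have hy : (X 1 : MvPolynomial (Fin 4) ℤ) ∈ yDegreeLE (X 0) (X 1) 1 := by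
      simpa using pow_mem_yDegreeLE (x := (X 0 : MvPolynomial (Fin 4) ℤ)) (y := X 1) (le_refl 1)
    exact mul_mem_yDegreeLE (by exact_mod_cast intCast_mem_yDegreeLE (X 0) (X 1) 0 2) hy
      (by omega)
  · exact mul_mem_yDegreeLE (by exact_mod_cast intCast_mem_yDegreeLE (X 0) (X 1) 0 4)
      f3_mem_yDegreeLE (by omega)

theorem mk_X0_pow_eq_one : Ideal.Quotient.mk (idealI n) (X 0) ^ n = 1 := by
  have h : Ideal.Quotient.mk (idealI n) (X 0 ^ n - 1) = 0 :=
    Ideal.Quotient.eq_zero_iff_mem.mpr (Ideal.subset_span (by simp))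
  rwa [map_sub, map_pow, map_one, sub_eq_zero] at h

theorem mk_f1_mul_mk_f2 :
    Ideal.Quotient.mk (idealI n) (f1 n) * Ideal.Quotient.mk (idealI n) (f2 n) = 0 := by
  rw [← map_mul, Ideal.Quotient.eq_zero_iff_mem]
  exact Ideal.subset_span (by simp)

theorem mk_X2_mul_mk_X3 :
    Ideal.Quotient.mk (idealI n) (X 2) * Ideal.Quotient.mk (idealI n) (X 3) =
      Ideal.Quotient.mk (idealI n) (1 + f1 n * (2 * X 1 + 4 * f3 n)) := by
  rw [← map_mul, Ideal.Quotient.eq, ← sub_sub]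
  exact Ideal.subset_span (by simp)

theorem mk_f1_mul_mk_X2 :
    Ideal.Quotient.mk (idealI n) (f1 n) * Ideal.Quotient.mk (idealI n) (X 2) =
      Ideal.Quotient.mk (idealI n) (f1 n * (1 + 2 * f4 n)) := by
  rw [← map_mul, Ideal.Quotient.eq, ← mul_sub, ← sub_sub]
  exact Ideal.subset_span (by simp)

theorem mk_f1_mul_mk_X3 :
    Ideal.Quotient.mk (idealI n) (f1 n) * Ideal.Quotient.mk (idealI n) (X 3) =
      Ideal.Quotient.mk (idealI n) (f1 n) * Ideal.Quotient.mk (idealI n) (X 2) := by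
  rw [← map_mul, ← map_mul, Ideal.Quotient.eq, ← mul_sub, ← neg_sub, mul_neg]
  exact neg_mem (Ideal.subset_span (by simp))

theorem mk_pow_mul_pow_mem (hn : 2 ≤ n)
    {M : Submodule ℤ (MvPolynomial (Fin 4) ℤ ⧸ idealI n)}
    (hM : ∀ i j, i < n → j ≤ 2 * n - 2 →
      Ideal.Quotient.mk (idealI n) (X 0) ^ i * Ideal.Quotient.mk (idealI n) (X 1) ^ j ∈ M)
    (a b : ℕ) :
    Ideal.Quotient.mk (idealI n) (X 0) ^ a * Ideal.Quotient.mk (idealI n) (X 1) ^ b ∈ M := by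
  have hy := map_mem_yDegreeLE (Ideal.Quotient.mk (idealI n))
    (X1_pow_sub_f1_mul_f2_mem_yDegreeLE hn)
  rw [map_sub, map_mul, mk_f1_mul_mk_f2, sub_zero, map_pow] at hy
  simpa using pow_mul_pow_mul_mem_of_pow_mul_eq (w := 1) (r := 0) (by omega) mk_X0_pow_eq_one
    hy (by simp) (by simp) (by simpa using hM) a b

theorem mk_pow_mul_pow_mul_pow_mem (hn : 2 ≤ n) {z : MvPolynomial (Fin 4) ℤ ⧸ idealI n}
    (hz : Ideal.Quotient.mk (idealI n) (f1 n) * z =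
      Ideal.Quotient.mk (idealI n) (f1 n * (1 + 2 * f4 n)))
    {M : Submodule ℤ (MvPolynomial (Fin 4) ℤ ⧸ idealI n)}
    (hxy : ∀ a b,
      Ideal.Quotient.mk (idealI n) (X 0) ^ a * Ideal.Quotient.mk (idealI n) (X 1) ^ b ∈ M)
    (hbase : ∀ i j m, i < n → j ≤ n - 2 → 0 < m →
      Ideal.Quotient.mk (idealI n) (X 0) ^ i * Ideal.Quotient.mk (idealI n) (X 1) ^ j * z ^ m ∈ M)
    (m a b : ℕ) :
    Ideal.Quotient.mk (idealI n) (X 0) ^ a * Ideal.Quotient.mk (idealI n) (X 1) ^ b * z ^ m ∈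
      M := by
  have hp := map_mem_yDegreeLE (Ideal.Quotient.mk (idealI n))
    (Submodule.neg_mem _ (f1_sub_mem_yDegreeLE (n := n)))
  rw [neg_sub, map_sub, map_pow, show n - 1 = n - 2 + 1 by omega] at hp
  refine pow_mul_pow_mul_pow_mem_of_pow_mul_eq (by omega) mk_X0_pow_eq_one hp
    (map_mem_yDegreeLE _ f1_mul_one_add_mem_yDegreeLE) (by linear_combination hz) hxy hbase m a b

theorem eq_top_of_mk_monomials_mem (hn : 2 ≤ n)
    {M : Submodule ℤ (MvPolynomial (Fin 4) ℤ ⧸ idealI n)}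
    (hxy : ∀ i j, i < n → j ≤ 2 * n - 2 →
      Ideal.Quotient.mk (idealI n) (X 0 ^ i * X 1 ^ j) ∈ M)
    (hzp : ∀ i j m, i < n → j ≤ n - 2 → 0 < m →
      Ideal.Quotient.mk (idealI n) (X 0 ^ i * X 1 ^ j * X 2 ^ m) ∈ M)
    (hzm : ∀ i j m, i < n → j ≤ n - 2 → 0 < m →
      Ideal.Quotient.mk (idealI n) (X 0 ^ i * X 1 ^ j * X 3 ^ m) ∈ M) :
    M = ⊤ := by
  simp only [map_mul, map_pow] at hxy hzp hzm
  have hxy' := mk_pow_mul_pow_mem hn hxy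
  have hzp' := mk_pow_mul_pow_mul_pow_mem hn mk_f1_mul_mk_X2 hxy' hzp
  have hzm' := mk_pow_mul_pow_mul_pow_mem hn (mk_f1_mul_mk_X3.trans mk_f1_mul_mk_X2) hxy' hzm
  refine Submodule.eq_top_of_forall_monomial_mem Ideal.Quotient.mk_surjective fun s => ?_
  rw [monomial_one_fin_four]
  simp only [map_mul, map_pow]
  exact pow_mul_pow_mul_pow_mul_pow_mem_of_mul_eq mk_X2_mul_mk_X3
    (map_mem_yDegreeLE _ (one_add_f1_mul_mem_yDegreeLE hn)) hzp' hzm' _ _ _ _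

end

/-- (From the proof of Proposition 3.9.) The quotient ring `ℤ[x, y, z₊, z₋]/I` is generated,
as a `ℤ`-module, by
`{x̄^i ȳ^j | 0 ≤ i ≤ n-1, 0 ≤ j ≤ 2n-2} ∪ {x̄^i ȳ^l z̄₊^m, x̄^i ȳ^l z̄₋^m |
  0 ≤ i ≤ n-1, 0 ≤ l ≤ n-2, m ≥ 1}`. -/
theorem quotient_spanned (n : ℕ) (hn : 2 < n) :
    Submodule.span ℤ
      (({q | ∃ i j : ℕ, i ≤ n - 1 ∧ j ≤ 2 * n - 2 ∧
          q = Ideal.Quotient.mk (idealI n) (X 0 ^ i * X 1 ^ j)} ∪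
        {q | ∃ i l m : ℕ, i ≤ n - 1 ∧ l ≤ n - 2 ∧ 1 ≤ m ∧
          q = Ideal.Quotient.mk (idealI n) (X 0 ^ i * X 1 ^ l * X 2 ^ m)} ∪
        {q | ∃ i l m : ℕ, i ≤ n - 1 ∧ l ≤ n - 2 ∧ 1 ≤ m ∧
          q = Ideal.Quotient.mk (idealI n) (X 0 ^ i * X 1 ^ l * X 3 ^ m)} :
        Set (MvPolynomial (Fin 4) ℤ ⧸ idealI n))) = ⊤ := by
  refine eq_top_of_mk_monomials_mem hn.le (fun i j hi hj => ?_) (fun i l m hi hl hm => ?_)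
    (fun i l m hi hl hm => ?_) <;> apply Submodule.subset_span
  · exact Or.inl (Or.inl ⟨i, j, by omega, hj, rfl⟩)
  · exact Or.inl (Or.inr ⟨i, l, m, by omega, hl, hm, rfl⟩)
  · exact Or.inr ⟨i, l, m, by omega, hl, hm, rfl⟩
end
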